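/- Let t > 0. For z ∈ ℂ with 0 < |z| < min{2t, 2π}, define Ĥ(t,z) = coth(z/2) + ∑_{k=1}^{∞} [coth((z−2kt)/2) + coth((z+2kt)/2)]; the series converges locally uniformly on this punctured region. Moreover, the series ∑_{k=1}^{∞} 1/sinh²(kt) converges, and lim_{z→0} (Ĥ(t,z) − 2/z)/z = 1/6 − ∑_{k=1}^{∞} 1/sinh²(kt). -/

import Mathlib

/-!
Pair the terms `k` and `-k`. For `|Re z| ≤ r < a`, both `coth ((z + a) / 2) - 1` and
`coth ((z - a) / 2) + 1` are `O(e^(r - a))`, so with `a = 2kt` the pairs are dominated by a geometric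
series on every disc `|z| ≤ r < 2t` (Weierstrass M-test). Their sum `h` is therefore holomorphic on
`|z| < 2t` and vanishes at `0` (each pair is odd), and termwise differentiation gives
`h'(0) = -∑ 1 / sinh²(kt)`; in particular this series converges. Finally
`coth (z / 2) - 2 / z = z / 6 + O(z²)`, read off from the cubic Taylor polynomial of `exp`.
-/

open Complex Filter

noncomputable def ccoth (z : ℂ) : ℂ := Complex.cosh z / Complex.sinh z

noncomputable def HHat (t : ℝ) (z : ℂ) : ℂ :=
  ccoth (z / 2) + ∑' k : ℕ,
    (ccoth ((z - 2 * ((k : ℂ) + 1) * (t : ℂ)) / 2)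
      + ccoth ((z + 2 * ((k : ℂ) + 1) * (t : ℂ)) / 2))

open Metric Topology

lemma ccoth_neg (w : ℂ) : ccoth (-w) = -ccoth w := by
  rw [ccoth, ccoth, sinh_neg, cosh_neg, div_neg]

lemma sinh_ne_zero_of_re_ne_zero {w : ℂ} (hw : w.re ≠ 0) : sinh w ≠ 0 := by
  intro h
  have hexp : exp w = exp (-w) := by
    rw [sinh, div_eq_zero_iff, sub_eq_zero] at h
    exact h.resolve_right two_ne_zero
  have := congrArg norm hexp
  rw [norm_exp, norm_exp, neg_re, Real.exp_eq_exp] at this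
  exact hw (by linarith)

lemma ccoth_sub_one {w : ℂ} (hw : exp (2 * w) ≠ 1) : ccoth w - 1 = 2 / (exp (2 * w) - 1) := by
  have h2w : exp (2 * w) = exp w ^ 2 := by rw [← exp_nat_mul]; norm_num
  have hsub : exp w ^ 2 - 1 ≠ 0 := sub_ne_zero.mpr (h2w ▸ hw)
  have hw0 : exp w ≠ 0 := exp_ne_zero w
  rw [ccoth, cosh, sinh, exp_neg, h2w]
  have : exp w - (exp w)⁻¹ ≠ 0 := by
    intro h; apply hsub; field_simp at h; linear_combination h
  field_simp
  ring

lemma norm_ccoth_sub_one_le {w : ℂ} {x : ℝ} (hx : 0 < x) (hxw : x ≤ 2 * w.re) :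
    ‖ccoth w - 1‖ ≤ 2 / (Real.exp x - 1) := by
  have hex : 0 < Real.exp x - 1 := by linarith [Real.one_lt_exp_iff.mpr hx]
  have hnorm : Real.exp x - 1 ≤ ‖exp (2 * w) - 1‖ := by
    calc Real.exp x - 1 ≤ ‖exp (2 * w)‖ - ‖(1 : ℂ)‖ := by
          rw [norm_exp, norm_one]; gcongr; simpa using hxw
      _ ≤ ‖exp (2 * w) - 1‖ := norm_sub_norm_le _ _
  have hne : exp (2 * w) ≠ 1 := fun h => by rw [h, sub_self, norm_zero] at hnorm; linarith
  rw [ccoth_sub_one hne, norm_div, RCLike.norm_ofNat]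
  gcongr

noncomputable def cothPair (a : ℝ) (z : ℂ) : ℂ := ccoth ((z - a) / 2) + ccoth ((z + a) / 2)

lemma norm_cothPair_le {a r : ℝ} (hra : r < a) {z : ℂ} (hz : ‖z‖ ≤ r) :
    ‖cothPair a z‖ ≤ 4 / (Real.exp (a - r) - 1) := by
  have hre := abs_le.mp ((abs_re_le_norm z).trans hz)
  have hsplit : cothPair a z = (ccoth ((z + a) / 2) - 1) - (ccoth ((a - z) / 2) - 1) := by
    rw [cothPair, show (z - a) / 2 = -((a - z) / 2) by ring, ccoth_neg]; ring
  have h₁ : ‖ccoth ((z + a) / 2) - 1‖ ≤ 2 / (Real.exp (a - r) - 1) :=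
    norm_ccoth_sub_one_le (by linarith) (by simp; linarith)
  have h₂ : ‖ccoth ((a - z) / 2) - 1‖ ≤ 2 / (Real.exp (a - r) - 1) :=
    norm_ccoth_sub_one_le (by linarith) (by simp; linarith)
  calc ‖cothPair a z‖ ≤ ‖ccoth ((z + a) / 2) - 1‖ + ‖ccoth ((a - z) / 2) - 1‖ := by
        rw [hsplit]; exact norm_sub_le _ _
    _ ≤ 2 / (Real.exp (a - r) - 1) + 2 / (Real.exp (a - r) - 1) := add_le_add h₁ h₂
    _ = 4 / (Real.exp (a - r) - 1) := by ring

lemma one_div_exp_sub_one_le {x c : ℝ} (hc : 0 < c) (hcx : c ≤ x) :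
    1 / (Real.exp x - 1) ≤ Real.exp (-x) / (1 - Real.exp (-c)) := by
  have hexp : Real.exp (-x) ≤ Real.exp (-c) := Real.exp_le_exp.mpr (by linarith)
  have hc' : 0 < 1 - Real.exp (-c) := by linarith [Real.exp_lt_one_iff.mpr (neg_lt_zero.mpr hc)]
  have hx : 0 < Real.exp x - 1 := by linarith [Real.one_lt_exp_iff.mpr (hc.trans_le hcx)]
  rw [div_le_div_iff₀ hx hc', one_mul, mul_sub, mul_one, ← Real.exp_add, neg_add_cancel,
    Real.exp_zero]
  linarith

lemma summable_one_div_exp_mul_add_sub_one {s c : ℝ} (hs : 0 < s) (hc : 0 < c) :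
    Summable fun k : ℕ => 1 / (Real.exp (s * k + c) - 1) := by
  have hgeom : Summable fun k : ℕ => Real.exp (-(s * k + c)) / (1 - Real.exp (-c)) := by
    refine ((Real.summable_exp_nat_mul_iff.mpr (neg_lt_zero.mpr hs)).mul_left
      (Real.exp (-c) / (1 - Real.exp (-c)))).congr fun k => ?_
    rw [div_mul_eq_mul_div, ← Real.exp_add]; ring_nf
  refine hgeom.of_nonneg_of_le (fun k => ?_) fun k => one_div_exp_sub_one_le hc
    (le_add_of_nonneg_left (by positivity))
  have : 1 < Real.exp (s * k + c) := Real.one_lt_exp_iff.mpr (by positivity)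
  exact div_nonneg zero_le_one (by linarith)

lemma cothPair_zero (a : ℝ) : cothPair a 0 = 0 := by
  rw [cothPair, zero_sub, zero_add, neg_div, ccoth_neg, neg_add_cancel]

lemma cothPair_two_mul_succ (t : ℝ) (k : ℕ) (z : ℂ) :
    cothPair (2 * ((k + 1) * t)) z = ccoth ((z - 2 * ((k : ℂ) + 1) * (t : ℂ)) / 2)
      + ccoth ((z + 2 * ((k : ℂ) + 1) * (t : ℂ)) / 2) := by
  simp only [cothPair]; push_cast; ring_nf

lemma hasDerivAt_ccoth {w : ℂ} (hw : sinh w ≠ 0) : HasDerivAt ccoth (-1 / sinh w ^ 2) w := by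
  have h := (hasDerivAt_cosh w).div (hasDerivAt_sinh w) hw
  rwa [show sinh w * sinh w - cosh w * cosh w = -1 by
    linear_combination (-1 : ℂ) * cosh_sq_sub_sinh_sq w] at h

lemma hasDerivAt_cothPair {a : ℝ} {z : ℂ} (h₁ : sinh ((z - a) / 2) ≠ 0)
    (h₂ : sinh ((z + a) / 2) ≠ 0) :
    HasDerivAt (cothPair a) (-(1 / sinh ((z - a) / 2) ^ 2 + 1 / sinh ((z + a) / 2) ^ 2) / 2) z := by
  have d₁ := (hasDerivAt_ccoth h₁).comp z (((hasDerivAt_id z).sub_const (a : ℂ)).div_const 2)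
  have d₂ := (hasDerivAt_ccoth h₂).comp z (((hasDerivAt_id z).add_const (a : ℂ)).div_const 2)
  exact (d₁.add d₂).congr_deriv (by ring)

lemma differentiableOn_cothPair {a r : ℝ} (hra : r ≤ a) :
    DifferentiableOn ℂ (cothPair a) (ball 0 r) := by
  intro z hz
  have hre := abs_lt.mp ((abs_re_le_norm z).trans_lt (mem_ball_zero_iff.mp hz))
  refine (hasDerivAt_cothPair ?_ ?_).differentiableAt.differentiableWithinAt <;>
    refine sinh_ne_zero_of_re_ne_zero ?_ <;> simp <;> linarith

lemma hasDerivAt_cothPair_two_mul_zero {b : ℝ} (hb : b ≠ 0) :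
    HasDerivAt (cothPair (2 * b)) (-((1 / Real.sinh b ^ 2 : ℝ) : ℂ)) 0 := by
  have e₁ : ((0 : ℂ) - ((2 * b : ℝ) : ℂ)) / 2 = -(b : ℂ) := by push_cast; ring
  have e₂ : ((0 : ℂ) + ((2 * b : ℝ) : ℂ)) / 2 = (b : ℂ) := by push_cast; ring
  have hs : sinh (b : ℂ) ≠ 0 := by rw [← ofReal_sinh]; exact_mod_cast Real.sinh_ne_zero.mpr hb
  convert hasDerivAt_cothPair (a := 2 * b) (z := 0) (by rw [e₁, sinh_neg]; exact neg_ne_zero.mpr hs)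
    (by rw [e₂]; exact hs) using 1
  rw [e₁, e₂, sinh_neg, neg_sq, ← ofReal_sinh]; push_cast; ring

lemma norm_exp_sub_cubic_le {w : ℂ} (hw : ‖w‖ ≤ 1) :
    ‖exp w - (1 + w + w ^ 2 / 2 + w ^ 3 / 6)‖ ≤ ‖w‖ ^ 4 := by
  have h := exp_bound hw (by norm_num : 0 < 4)
  have hsum : ∑ m ∈ Finset.range 4, w ^ m / (m.factorial : ℂ) = 1 + w + w ^ 2 / 2 + w ^ 3 / 6 := by
    simp [Finset.sum_range_succ, Nat.factorial]
  rw [hsum] at h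
  refine h.trans (mul_le_of_le_one_right (by positivity) ?_)
  norm_num [Nat.factorial]

lemma norm_mul_cosh_sub_sinh_sub_le {w : ℂ} (hw : ‖w‖ ≤ 1) :
    ‖w * cosh w - sinh w - w ^ 3 / 3‖ ≤ 2 * ‖w‖ ^ 4 := by
  have h₁ := norm_exp_sub_cubic_le hw
  have h₂ := norm_exp_sub_cubic_le (w := -w) (by rwa [norm_neg])
  rw [norm_neg] at h₂
  have hw₁ : ‖w - 1‖ ≤ 2 := (norm_sub_le _ _).trans (by rw [norm_one]; linarith)
  have hw₂ : ‖w + 1‖ ≤ 2 := (norm_add_le _ _).trans (by rw [norm_one]; linarith)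
  have key : w * cosh w - sinh w - w ^ 3 / 3 =
      ((exp w - (1 + w + w ^ 2 / 2 + w ^ 3 / 6)) * (w - 1)
        + (exp (-w) - (1 + -w + (-w) ^ 2 / 2 + (-w) ^ 3 / 6)) * (w + 1)) / 2 := by
    rw [cosh, sinh]; ring
  rw [key, norm_div, RCLike.norm_ofNat, div_le_iff₀ two_pos]
  calc _ ≤ ‖w‖ ^ 4 * 2 + ‖w‖ ^ 4 * 2 := by
        refine (norm_add_le _ _).trans (add_le_add ?_ ?_) <;> rw [norm_mul] <;> gcongr
    _ = 2 * ‖w‖ ^ 4 * 2 := by ring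

lemma tendsto_mul_cosh_sub_sinh_div_pow_three :
    Tendsto (fun w : ℂ => (w * cosh w - sinh w) / w ^ 3) (𝓝[≠] 0) (𝓝 (1 / 3)) := by
  rw [tendsto_iff_norm_sub_tendsto_zero]
  have hbound : Tendsto (fun w : ℂ => 2 * ‖w‖) (𝓝[≠] 0) (𝓝 0) := by
    simpa using ((continuous_norm.tendsto (0 : ℂ)).const_mul 2).mono_left nhdsWithin_le_nhds
  refine squeeze_zero_norm' ?_ hbound
  filter_upwards [self_mem_nhdsWithin, nhdsWithin_le_nhds (closedBall_mem_nhds (0 : ℂ) one_pos)]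
    with w (hw₀ : w ≠ 0) hw₁
  rw [mem_closedBall_zero_iff] at hw₁
  rw [norm_norm, show (w * cosh w - sinh w) / w ^ 3 - 1 / 3 = (w * cosh w - sinh w - w ^ 3 / 3) / w ^ 3
    by field_simp, norm_div, norm_pow, div_le_iff₀ (by positivity)]
  calc _ ≤ 2 * ‖w‖ ^ 4 := norm_mul_cosh_sub_sinh_sub_le hw₁
    _ = 2 * ‖w‖ * ‖w‖ ^ 3 := by ring

lemma tendsto_sinh_div_self : Tendsto (fun w : ℂ => sinh w / w) (𝓝[≠] 0) (𝓝 1) := by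
  have h := hasDerivAt_iff_tendsto_slope.mp (hasDerivAt_sinh 0)
  rw [cosh_zero] at h
  exact h.congr fun w => by rw [slope_def_field, sinh_zero, sub_zero, sub_zero]

lemma tendsto_ccoth_half_sub_div :
    Tendsto (fun z : ℂ => (ccoth (z / 2) - 2 / z) / z) (𝓝[≠] 0) (𝓝 (1 / 6)) := by
  have hhalf : Tendsto (fun z : ℂ => z / 2) (𝓝[≠] 0) (𝓝[≠] 0) :=
    tendsto_nhdsWithin_of_tendsto_nhds_of_eventually_within _
      ((continuous_id.div_const 2).tendsto' 0 0 (zero_div 2) |>.mono_left nhdsWithin_le_nhds)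
      (eventually_mem_nhdsWithin.mono fun z (hz : z ≠ 0) => div_ne_zero hz two_ne_zero)
  have hsinh := tendsto_sinh_div_self.comp hhalf
  have hlim := ((tendsto_mul_cosh_sub_sinh_div_pow_three.comp hhalf).div hsinh one_ne_zero).div_const 2
  rw [show (1 : ℂ) / 3 / 1 / 2 = 1 / 6 by norm_num] at hlim
  refine hlim.congr' ?_
  filter_upwards [self_mem_nhdsWithin, hsinh.eventually_ne one_ne_zero] with z (hz : z ≠ 0) hs
  have hs : sinh (z / 2) ≠ 0 := fun h => hs (by simp [h])
  simp only [Pi.div_apply, Function.comp_apply, ccoth]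
  field_simp

lemma tendstoUniformlyOn_const_add {ι α E : Type*} [SeminormedAddCommGroup E] {F : ι → α → E}
    {f : α → E} {l : Filter ι} {s : Set α} (g : α → E) (h : TendstoUniformlyOn F f l s) :
    TendstoUniformlyOn (fun n x => g x + F n x) (fun x => g x + f x) l s := by
  rw [Metric.tendstoUniformlyOn_iff] at h ⊢
  simpa only [dist_add_left] using h

noncomputable def cothPairSum (t : ℝ) (z : ℂ) : ℂ := ∑' k : ℕ, cothPair (2 * ((k + 1) * t)) z

section Series

variable {t : ℝ}

lemma norm_cothPair_le_of_mem_closedBall (ht : 0 < t) {r : ℝ} (hr : r < 2 * t) (k : ℕ) {z : ℂ}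
    (hz : z ∈ closedBall 0 r) :
    ‖cothPair (2 * ((k + 1) * t)) z‖ ≤ 4 / (Real.exp (2 * ((k + 1) * t) - r) - 1) :=
  norm_cothPair_le (by nlinarith [(k.cast_nonneg : (0 : ℝ) ≤ k)]) (mem_closedBall_zero_iff.mp hz)

lemma summable_cothPair_bound (ht : 0 < t) {r : ℝ} (hr : r < 2 * t) :
    Summable fun k : ℕ => 4 / (Real.exp (2 * ((k + 1) * t) - r) - 1) := by
  refine ((summable_one_div_exp_mul_add_sub_one (by linarith : 0 < 2 * t)
    (by linarith : 0 < 2 * t - r)).mul_left 4).congr fun k => ?_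
  ring_nf

lemma tendstoUniformlyOn_cothPair_sum (ht : 0 < t) {r : ℝ} (hr : r < 2 * t) :
    TendstoUniformlyOn (fun N z => ∑ k ∈ Finset.range N, cothPair (2 * ((k + 1) * t)) z)
      (cothPairSum t) atTop (closedBall 0 r) :=
  tendstoUniformlyOn_tsum_nat (summable_cothPair_bound ht hr) fun k _ =>
    norm_cothPair_le_of_mem_closedBall ht hr k

lemma norm_cothPair_le_of_mem_ball (ht : 0 < t) (k : ℕ) (z : ℂ) (hz : z ∈ ball 0 t) :
    ‖cothPair (2 * ((k + 1) * t)) z‖ ≤ 4 / (Real.exp (2 * ((k + 1) * t) - t) - 1) :=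
  norm_cothPair_le_of_mem_closedBall ht (by linarith) k (ball_subset_closedBall hz)

lemma differentiableOn_cothPair_two_mul_succ (ht : 0 < t) (k : ℕ) :
    DifferentiableOn ℂ (cothPair (2 * ((k + 1) * t))) (ball 0 t) :=
  differentiableOn_cothPair (by nlinarith [(k.cast_nonneg : (0 : ℝ) ≤ k)])

lemma hasSum_one_div_sinh_sq (ht : 0 < t) :
    HasSum (fun k : ℕ => ((1 / Real.sinh ((k + 1) * t) ^ 2 : ℝ) : ℂ)) (-deriv (cothPairSum t) 0) := by
  have hderiv := hasSum_deriv_of_summable_norm (summable_cothPair_bound ht (r := t) (by linarith))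
    (differentiableOn_cothPair_two_mul_succ ht) isOpen_ball (norm_cothPair_le_of_mem_ball ht)
    (mem_ball_self ht)
  have hterm (k : ℕ) : -deriv (cothPair (2 * ((k + 1) * t))) 0 =
      ((1 / Real.sinh ((k + 1) * t) ^ 2 : ℝ) : ℂ) := by
    rw [(hasDerivAt_cothPair_two_mul_zero (by positivity)).deriv, neg_neg]
  have h := hderiv.neg
  simp only [hterm] at h
  exact h

lemma tendsto_cothPairSum_div (ht : 0 < t) :
    Tendsto (fun z => cothPairSum t z / z) (𝓝[≠] 0) (𝓝 (deriv (cothPairSum t) 0)) := by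
  have hdiff : DifferentiableAt ℂ (cothPairSum t) 0 :=
    (differentiableOn_tsum_of_summable_norm (summable_cothPair_bound ht (r := t) (by linarith))
      (differentiableOn_cothPair_two_mul_succ ht) isOpen_ball
      (norm_cothPair_le_of_mem_ball ht)).differentiableAt (isOpen_ball.mem_nhds (mem_ball_self ht))
  refine (hasDerivAt_iff_tendsto_slope.mp hdiff.hasDerivAt).congr fun z => ?_
  rw [slope_def_field, cothPairSum, cothPairSum]
  simp [cothPair_zero]

end Series

/-- Let `t > 0`. The series defining `Ĥ(t,·)` converges locally uniformly on
`{z : 0 < |z| < min(2t, 2π)}`; the series `∑_{k≥1} 1/sinh²(kt)` converges; and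
`lim_{z→0} (Ĥ(t,z) − 2/z)/z = 1/6 − ∑_{k=1}^∞ 1/sinh²(kt)`. -/
theorem statement13 (t : ℝ) (ht : 0 < t) :
    TendstoLocallyUniformlyOn
      (fun N : ℕ => fun z : ℂ => ccoth (z / 2) + ∑ k ∈ Finset.range N,
        (ccoth ((z - 2 * ((k : ℂ) + 1) * (t : ℂ)) / 2)
          + ccoth ((z + 2 * ((k : ℂ) + 1) * (t : ℂ)) / 2)))
      (fun z => HHat t z) Filter.atTop
      {z : ℂ | 0 < ‖z‖ ∧ ‖z‖ < min (2 * t) (2 * Real.pi)} ∧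
    Summable (fun k : ℕ => 1 / Real.sinh (((k : ℝ) + 1) * t) ^ 2) ∧
    Filter.Tendsto (fun z : ℂ => (HHat t z - 2 / z) / z)
      (nhdsWithin 0 {(0 : ℂ)}ᶜ)
      (nhds (((1 / 6 - ∑' k : ℕ, 1 / Real.sinh (((k : ℝ) + 1) * t) ^ 2 : ℝ) : ℂ))) := by
  have hHHat : ∀ z, HHat t z = ccoth (z / 2) + cothPairSum t z := fun z => by
    simp only [HHat, cothPairSum, cothPair_two_mul_succ]
  simp only [hHHat, ← cothPair_two_mul_succ]
  have hsum := hasSum_one_div_sinh_sq ht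
  refine ⟨?_, Complex.summable_ofReal.mp hsum.summable, ?_⟩
  · refine tendstoLocallyUniformlyOn_of_forall_exists_nhds fun z hz => ?_
    have hz' : ‖z‖ < 2 * t := hz.2.trans_le (min_le_left _ _)
    refine ⟨closedBall 0 ((‖z‖ + 2 * t) / 2), nhdsWithin_le_nhds (closedBall_mem_nhds_of_mem ?_),
      tendstoUniformlyOn_const_add _ (tendstoUniformlyOn_cothPair_sum ht (by linarith))⟩
    rw [mem_ball_zero_iff]; linarith
  · have hlim := tendsto_ccoth_half_sub_div.add (tendsto_cothPairSum_div ht)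
    rw [← neg_neg (deriv _ _), ← hsum.tsum_eq, ← ofReal_tsum] at hlim
    convert hlim using 2 with z
    · ring
    · push_cast; ring
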